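/- The CCS dialgebra (X,f) with F(X)=X+X×X, B(X)=P(X) and the CCS labelled transition system (X,g) (an X → P(L×X) coalgebra with labels L = {τ} ∪ {a, ā | a a channel}) induce the same bisimilarity relation on the set X of CCS processes: two processes are dialgebraically bisimilar if and only if they are strongly bisimilar in the LTS. -/
import Mathlib


/-! CCS (without recursion): syntax, structural congruence, the labelled
transition system, and the reaction dialgebra for the interaction functor
`F(X) = X + X × X` and observation functor `B(X) = P(X)`. -/

/-- Prefixes/labels of CCS: the internal step `τ`, input `a`, output `ā`. -/
inductive Act : Type
  | tau : Act
  | inp (a : ℕ) : Act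
  | out (a : ℕ) : Act
deriving DecidableEq

/-- Free names of a prefix. -/
def fnAct : Act → Set ℕ
  | .tau => ∅
  | .inp a => {a}
  | .out a => {a}

mutual
/-- CCS processes: guarded sums, parallel composition, restriction. -/
inductive Proc : Type
  | sum : Sm → Proc
  | par : Proc → Proc → Proc
  | res : ℕ → Proc → Proc
/-- Finite guarded sums `Σ αᵢ.Pᵢ`. -/
inductive Sm : Type
  | nil : Sm
  | cons : Act → Proc → Sm → Sm
end

/-- The empty process `0`. -/
def Proc.zero : Proc := Proc.sum Sm.nil

/-- Renaming of names in a prefix. -/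
def renameAct (f : ℕ → ℕ) : Act → Act
  | .tau => .tau
  | .inp a => .inp (f a)
  | .out a => .out (f a)

mutual
/-- Renaming of names (applied by a bijection, e.g. a transposition). -/
def renameP (f : ℕ → ℕ) : Proc → Proc
  | .sum s => .sum (renameS f s)
  | .par p q => .par (renameP f p) (renameP f q)
  | .res a p => .res (f a) (renameP f p)
def renameS (f : ℕ → ℕ) : Sm → Sm
  | .nil => .nil
  | .cons α p s => .cons (renameAct f α) (renameP f p) (renameS f s)
end

mutual
/-- `FreeP a p`: the name `a` occurs free in the process `p`. -/
inductive FreeP : ℕ → Proc → Prop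
  | sum {a : ℕ} {s : Sm} : FreeS a s → FreeP a (.sum s)
  | parL {a : ℕ} {p q : Proc} : FreeP a p → FreeP a (.par p q)
  | parR {a : ℕ} {p q : Proc} : FreeP a q → FreeP a (.par p q)
  | res {a b : ℕ} {p : Proc} : a ≠ b → FreeP a p → FreeP a (.res b p)
/-- `FreeS a s`: the name `a` occurs free in the sum `s`. -/
inductive FreeS : ℕ → Sm → Prop
  | act {a : ℕ} {α : Act} {p : Proc} {s : Sm} :
      a ∈ fnAct α → FreeS a (.cons α p s)
  | headP {a : ℕ} {α : Act} {p : Proc} {s : Sm} :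
      FreeP a p → FreeS a (.cons α p s)
  | tail {a : ℕ} {α : Act} {p : Proc} {s : Sm} :
      FreeS a s → FreeS a (.cons α p s)
end

mutual
/-- Structural congruence on processes: the least congruence containing
α-conversion, the commutative-monoid laws for `∥` with unit `0`, and the
scope-extrusion laws for restriction. -/
inductive CongP : Proc → Proc → Prop
  | refl (p : Proc) : CongP p p
  | symm {p q : Proc} : CongP p q → CongP q p
  | trans {p q r : Proc} : CongP p q → CongP q r → CongP p r
  | par_congr {p p' q q' : Proc} :
      CongP p p' → CongP q q' → CongP (.par p q) (.par p' q')
  | res_congr {a : ℕ} {p p' : Proc} : CongP p p' → CongP (.res a p) (.res a p')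
  | sum_congr {s s' : Sm} : CongS s s' → CongP (.sum s) (.sum s')
  | alpha {a b : ℕ} {p : Proc} :
      ¬ FreeP b p → CongP (.res a p) (.res b (renameP (Equiv.swap a b) p))
  | par_comm (p q : Proc) : CongP (.par p q) (.par q p)
  | par_assoc (p q r : Proc) : CongP (.par (.par p q) r) (.par p (.par q r))
  | par_zero (p : Proc) : CongP (.par p Proc.zero) p
  | res_par {a : ℕ} {p q : Proc} :
      ¬ FreeP a q → CongP (.res a (.par p q)) (.par (.res a p) q)
  | res_zero (a : ℕ) : CongP (.res a Proc.zero) Proc.zero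
  | res_res (a b : ℕ) (p : Proc) : CongP (.res a (.res b p)) (.res b (.res a p))
/-- Structural congruence on sums. -/
inductive CongS : Sm → Sm → Prop
  | refl (s : Sm) : CongS s s
  | symm {s t : Sm} : CongS s t → CongS t s
  | trans {s t v : Sm} : CongS s t → CongS t v → CongS s v
  | cons_congr {α : Act} {p p' : Proc} {s s' : Sm} :
      CongP p p' → CongS s s' → CongS (.cons α p s) (.cons α p' s')
end

/-- `SMem α p s`: the summand `α.p` occurs in the guarded sum `s`. -/
inductive SMem : Act → Proc → Sm → Prop
  | head {α : Act} {p : Proc} {s : Sm} : SMem α p (.cons α p s)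
  | tail {α β : Act} {p q : Proc} {s : Sm} : SMem α p s → SMem α p (.cons β q s)

/-- The labelled transition system of CCS: rules (pre), (res), (par), (syn), (str). -/
inductive Step : Proc → Act → Proc → Prop
  | pre {α : Act} {p : Proc} {s : Sm} : SMem α p s → Step (.sum s) α p
  | res {a : ℕ} {α : Act} {p p' : Proc} :
      a ∉ fnAct α → Step p α p' → Step (.res a p) α (.res a p')
  | par {α : Act} {p p' q : Proc} :
      Step p α p' → Step (.par p q) α (.par p' q)
  | syn {c : ℕ} {p p' q q' : Proc} :
      Step p (.out c) p' → Step q (.inp c) q' →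
      Step (.par p q) .tau (.par p' q')
  | str {α : Act} {p q p' q' : Proc} :
      CongP p q → CongP p' q' → Step p α p' → Step q α q'

mutual
/-- Unary reductions `P → R` of the CCS dialgebra:
rules (tau), (res), (par₁), (int), (str₁). -/
inductive URed : Proc → Proc → Prop
  | tau {p : Proc} {s : Sm} : SMem .tau p s → URed (.sum s) p
  | res {a : ℕ} {p p' : Proc} : URed p p' → URed (.res a p) (.res a p')
  | par1 {p p' q : Proc} : URed p p' → URed (.par p q) (.par p' q)
  | int {p q r : Proc} : BRed p q r → URed (.par p q) r
  | str1 {p q r s : Proc} : URed p r → CongP p q → CongP r s → URed q s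
/-- Binary interactions `(P,Q) → R` of the CCS dialgebra:
rules (hid), (par₂), (syn), (sym), (str₂). -/
inductive BRed : Proc → Proc → Proc → Prop
  | hid {a : ℕ} {p q r : Proc} :
      BRed p q r → ¬ FreeP a q → BRed (.res a p) q (.res a r)
  | par2 {p q r s : Proc} : BRed p q r → BRed (.par p s) q (.par s r)
  | syn {a : ℕ} {p q : Proc} {s t : Sm} :
      SMem (.out a) p s → SMem (.inp a) q t →
      BRed (.sum s) (.sum t) (.par p q)
  | sym {p q r : Proc} : BRed p q r → BRed q p r
  | str2 {p q r p' q' r' : Proc} :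
      BRed p q r → CongP p p' → CongP q q' → CongP r r' → BRed p' q' r'
end

/-- The CCS dialgebra, as a map `X + X × X → P(X)`. -/
def ccsDia : Proc ⊕ Proc × Proc → Set Proc
  | .inl p => { r | URed p r }
  | .inr (p, q) => { r | BRed p q r }

/-- Homomorphism condition for dialgebras of `F(X) = X + X × X`, `B(X) = P(X)`. -/
def IsIOHom {X Y : Type} (f : X ⊕ X × X → Set X) (g : Y ⊕ Y × Y → Set Y)
    (h : X → Y) : Prop :=
  (∀ x : X, g (Sum.inl (h x)) = h '' f (Sum.inl x)) ∧
  (∀ x y : X, g (Sum.inr (h x, h y)) = h '' f (Sum.inr (x, y)))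

/-- Dialgebraic bisimilarity on CCS processes: identification by some
dialgebra homomorphism out of the CCS dialgebra. -/
def DialgBisim (p q : Proc) : Prop :=
  ∃ (Y : Type) (g : Y ⊕ Y × Y → Set Y) (h : Proc → Y),
    IsIOHom ccsDia g h ∧ h p = h q

/-- A strong bisimulation for the CCS labelled transition system. -/
def IsBisimulation (R : Proc → Proc → Prop) : Prop :=
  Symmetric R ∧
  ∀ p q, R p q → ∀ (α : Act) (p' : Proc), Step p α p' →
    ∃ q', Step q α q' ∧ R p' q'

/-- Strong bisimilarity in the CCS labelled transition system. -/
def StrongBisim (p q : Proc) : Prop :=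
  ∃ R : Proc → Proc → Prop, IsBisimulation R ∧ R p q

/-! ### Auxiliary development -/

/-- Structural (str-free) LTS. -/
inductive StepS : Proc → Act → Proc → Prop
  | pre {α : Act} {p : Proc} {s : Sm} : SMem α p s → StepS (.sum s) α p
  | res {a : ℕ} {α : Act} {p p' : Proc} :
      a ∉ fnAct α → StepS p α p' → StepS (.res a p) α (.res a p')
  | parL {α : Act} {p p' q : Proc} :
      StepS p α p' → StepS (.par p q) α (.par p' q)
  | parR {α : Act} {p q q' : Proc} :
      StepS q α q' → StepS (.par p q) α (.par p q')
  | synL {c : ℕ} {p p' q q' : Proc} :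
      StepS p (.out c) p' → StepS q (.inp c) q' → StepS (.par p q) .tau (.par p' q')
  | synR {c : ℕ} {p p' q q' : Proc} :
      StepS p (.inp c) p' → StepS q (.out c) q' → StepS (.par p q) .tau (.par p' q')

/-! ### rename lemmas -/

mutual
theorem renameP_comp (f g : ℕ → ℕ) (p : Proc) :
    renameP f (renameP g p) = renameP (fun x => f (g x)) p := by
  cases p with
  | sum s => simp [renameP, renameS_comp f g s]
  | par p q => simp [renameP, renameP_comp f g p, renameP_comp f g q]
  | res a p => simp [renameP, renameP_comp f g p]
theorem renameS_comp (f g : ℕ → ℕ) (s : Sm) :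
    renameS f (renameS g s) = renameS (fun x => f (g x)) s := by
  cases s with
  | nil => rfl
  | cons α p s =>
      simp [renameS, renameP_comp f g p, renameS_comp f g s]
      cases α <;> rfl
end

mutual
theorem renameP_id (f : ℕ → ℕ) (hf : ∀ x, f x = x) (p : Proc) : renameP f p = p := by
  cases p with
  | sum s => simp [renameP, renameS_id f hf s]
  | par p q => simp [renameP, renameP_id f hf p, renameP_id f hf q]
  | res a p => simp [renameP, renameP_id f hf p, hf]
theorem renameS_id (f : ℕ → ℕ) (hf : ∀ x, f x = x) (s : Sm) : renameS f s = s := by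
  cases s with
  | nil => rfl
  | cons α p s =>
      simp [renameS, renameP_id f hf p, renameS_id f hf s]
      cases α <;> simp [renameAct, hf]
end

/-! ### FreeP inversion lemmas -/

theorem freeP_sum_iff {n : ℕ} {s : Sm} : FreeP n (.sum s) ↔ FreeS n s :=
  ⟨fun h => by cases h; assumption, FreeP.sum⟩

theorem freeP_par_iff {n : ℕ} {p q : Proc} :
    FreeP n (.par p q) ↔ FreeP n p ∨ FreeP n q :=
  by
  constructor
  · intro h
    cases h with
    | parL h => exact Or.inl h
    | parR h => exact Or.inr h
  · exact fun h => h.elim FreeP.parL FreeP.parR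

theorem freeP_res_iff {n a : ℕ} {p : Proc} :
    FreeP n (.res a p) ↔ n ≠ a ∧ FreeP n p :=
  ⟨fun h => by (cases h; exact ⟨‹_›, ‹_›⟩), fun h => FreeP.res h.1 h.2⟩

theorem freeS_nil_iff {n : ℕ} : FreeS n .nil ↔ False :=
  ⟨fun h => by (cases h), False.elim⟩

theorem freeS_cons_iff {n : ℕ} {α : Act} {p : Proc} {s : Sm} :
    FreeS n (.cons α p s) ↔ n ∈ fnAct α ∨ FreeP n p ∨ FreeS n s := by
  constructor
  · intro h; cases h
    · exact Or.inl ‹_›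
    · exact Or.inr (Or.inl ‹_›)
    · exact Or.inr (Or.inr ‹_›)
  · rintro (h | h | h)
    · exact FreeS.act h
    · exact FreeS.headP h
    · exact FreeS.tail h

theorem not_freeP_zero {n : ℕ} : ¬ FreeP n Proc.zero := by
  intro h; rw [Proc.zero, freeP_sum_iff, freeS_nil_iff] at h; exact h

mutual
theorem freeP_rename (σ : ℕ ≃ ℕ) (p : Proc) (n : ℕ) :
    FreeP n (renameP σ p) ↔ FreeP (σ.symm n) p := by
  cases p with
  | sum s => simp only [renameP, freeP_sum_iff]; exact freeS_rename σ s n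
  | par p q =>
      simp only [renameP, freeP_par_iff, freeP_rename σ p n, freeP_rename σ q n]
  | res a p =>
      simp only [renameP, freeP_res_iff, freeP_rename σ p n]
      constructor
      · rintro ⟨h1, h2⟩
        exact ⟨fun h => h1 (by rw [← h, Equiv.apply_symm_apply]), h2⟩
      · rintro ⟨h1, h2⟩
        exact ⟨fun h => h1 (by rw [h, Equiv.symm_apply_apply]), h2⟩
theorem freeS_rename (σ : ℕ ≃ ℕ) (s : Sm) (n : ℕ) :
    FreeS n (renameS σ s) ↔ FreeS (σ.symm n) s := by
  cases s with
  | nil => simp only [renameS, freeS_nil_iff]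
  | cons α p s =>
      simp only [renameS, freeS_cons_iff, freeP_rename σ p n, freeS_rename σ s n]
      have : n ∈ fnAct (renameAct σ α) ↔ σ.symm n ∈ fnAct α := by
        cases α with
        | tau => simp [fnAct, renameAct]
        | inp a => simp [fnAct, renameAct]; constructor
                   · intro h; rw [h, Equiv.symm_apply_apply]
                   · intro h; rw [← h, Equiv.apply_symm_apply]
        | out a => simp [fnAct, renameAct]; constructor
                   · intro h; rw [h, Equiv.symm_apply_apply]
                   · intro h; rw [← h, Equiv.apply_symm_apply]
      rw [this]
end

/-! ### Fresh names -/

def freshA : Act → ℕ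
  | .tau => 0
  | .inp a => a + 1
  | .out a => a + 1

mutual
def freshP : Proc → ℕ
  | .sum s => freshS s
  | .par p q => max (freshP p) (freshP q)
  | .res a p => max (a + 1) (freshP p)
def freshS : Sm → ℕ
  | .nil => 0
  | .cons α p s =>
      max (freshA α) (max (freshP p) (freshS s))
end

mutual
theorem lt_freshP {n : ℕ} {p : Proc} (h : FreeP n p) : n < freshP p := by
  cases p with
  | sum s => rw [freeP_sum_iff] at h; exact lt_freshS h
  | par p q =>
      rw [freeP_par_iff] at h
      rcases h with h | h
      · exact lt_of_lt_of_le (lt_freshP h) (le_max_left _ _)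
      · exact lt_of_lt_of_le (lt_freshP h) (le_max_right _ _)
  | res a p =>
      rw [freeP_res_iff] at h
      exact lt_of_lt_of_le (lt_freshP h.2) (le_max_right _ _)
theorem lt_freshS {n : ℕ} {s : Sm} (h : FreeS n s) : n < freshS s := by
  cases s with
  | nil => rw [freeS_nil_iff] at h; exact h.elim
  | cons α p s =>
      rw [freeS_cons_iff] at h
      rcases h with h | h | h
      · refine lt_of_lt_of_le ?_ (le_max_left _ _)
        cases α with
        | tau => simp [fnAct] at h
        | inp a => simp [fnAct] at h; simp [freshA]; omega
        | out a => simp [fnAct] at h; simp [freshA]; omega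
      · exact lt_of_lt_of_le (lt_of_lt_of_le (lt_freshP h) (le_max_left _ _)) (le_max_right _ _)
      · exact lt_of_lt_of_le (lt_of_lt_of_le (lt_freshS h) (le_max_right _ _)) (le_max_right _ _)
end

theorem not_free_of_fresh {n : ℕ} {p : Proc} (h : freshP p ≤ n) : ¬ FreeP n p :=
  fun hf => absurd (lt_freshP hf) (by omega)

/-! ### SMem and StepS basic lemmas -/

theorem smem_free_act {α : Act} {p : Proc} {s : Sm} (h : SMem α p s)
    {n : ℕ} (hn : n ∈ fnAct α) : FreeS n s := by
  induction h with
  | head => exact FreeS.act hn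
  | tail _ ih => exact FreeS.tail ih

theorem smem_free_proc {α : Act} {p : Proc} {s : Sm} (h : SMem α p s)
    {n : ℕ} (hn : FreeP n p) : FreeS n s := by
  induction h with
  | head => exact FreeS.headP hn
  | tail _ ih => exact FreeS.tail (ih hn)

theorem smem_rename (f : ℕ → ℕ) {α : Act} {p : Proc} {s : Sm} (h : SMem α p s) :
    SMem (renameAct f α) (renameP f p) (renameS f s) := by
  induction h with
  | head => exact SMem.head
  | tail _ ih => exact SMem.tail ih

theorem fnAct_rename_mem (σ : ℕ ≃ ℕ) {α : Act} {n : ℕ} :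
    σ n ∈ fnAct (renameAct σ α) ↔ n ∈ fnAct α := by
  cases α <;> simp [fnAct, renameAct]

theorem fnAct_rename_mem' (σ : ℕ ≃ ℕ) {α : Act} {n : ℕ} :
    n ∈ fnAct (renameAct σ α) ↔ σ.symm n ∈ fnAct α := by
  have := fnAct_rename_mem σ (α := α) (n := σ.symm n)
  rwa [Equiv.apply_symm_apply] at this

theorem stepS_rename (σ : ℕ ≃ ℕ) {p : Proc} {α : Act} {p' : Proc}
    (h : StepS p α p') : StepS (renameP σ p) (renameAct σ α) (renameP σ p') := by
  induction h with
  | pre h => exact StepS.pre (smem_rename σ h)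
  | res ha _ ih =>
      exact StepS.res (fun hc => ha ((fnAct_rename_mem σ).mp hc)) ih
  | parL _ ih => exact StepS.parL ih
  | parR _ ih => exact StepS.parR ih
  | synL _ _ ih1 ih2 => exact StepS.synL ih1 ih2
  | synR _ _ ih1 ih2 => exact StepS.synR ih1 ih2

/-- Labels of structural steps are free names. -/
theorem stepS_fnAct_free {p : Proc} {α : Act} {p' : Proc} (h : StepS p α p')
    {n : ℕ} (hn : n ∈ fnAct α) : FreeP n p := by
  induction h with
  | pre h => exact FreeP.sum (smem_free_act h hn)
  | res ha _ ih => exact FreeP.res (fun he => ha (he ▸ hn)) (ih hn)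
  | parL _ ih => exact FreeP.parL (ih hn)
  | parR _ ih => exact FreeP.parR (ih hn)
  | synL _ _ _ _ => simp [fnAct] at hn
  | synR _ _ _ _ => simp [fnAct] at hn

/-- Structural steps do not create free names. -/
theorem stepS_free_mono {p : Proc} {α : Act} {p' : Proc} (h : StepS p α p')
    {n : ℕ} (hn : FreeP n p') : FreeP n p := by
  induction h with
  | pre h => exact FreeP.sum (smem_free_proc h hn)
  | res ha _ ih =>
      rw [freeP_res_iff] at hn ⊢; exact ⟨hn.1, ih hn.2⟩
  | parL _ ih =>
      rw [freeP_par_iff] at hn ⊢; exact hn.imp ih id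
  | parR _ ih =>
      rw [freeP_par_iff] at hn ⊢; exact hn.imp id ih
  | synL _ _ ih1 ih2 =>
      rw [freeP_par_iff] at hn ⊢; exact hn.imp ih1 ih2
  | synR _ _ ih1 ih2 =>
      rw [freeP_par_iff] at hn ⊢; exact hn.imp ih1 ih2

theorem not_stepS_zero {α : Act} {p' : Proc} (h : StepS Proc.zero α p') : False := by
  rw [Proc.zero] at h
  cases h with
  | pre h => cases h

/-! ### Structural congruence preserves free names -/

theorem congP_free {p q : Proc} (h : CongP p q) : ∀ n, FreeP n p ↔ FreeP n q := by
  refine CongP.rec (motive_1 := fun p q _ => ∀ n, FreeP n p ↔ FreeP n q)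
    (motive_2 := fun s t _ => ∀ n, FreeS n s ↔ FreeS n t)
    ?_ ?_ ?_ ?_ ?_ ?_ ?_ ?_ ?_ ?_ ?_ ?_ ?_ ?_ ?_ ?_ ?_ h
  · exact fun p n => Iff.rfl
  · exact fun _ ih n => (ih n).symm
  · exact fun _ _ ih1 ih2 n => (ih1 n).trans (ih2 n)
  · intro p p' q q' _ _ ih1 ih2 n
    rw [freeP_par_iff, freeP_par_iff, ih1 n, ih2 n]
  · intro a p p' _ ih n
    rw [freeP_res_iff, freeP_res_iff, ih n]
  · intro s s' _ ih n
    rw [freeP_sum_iff, freeP_sum_iff, ih n]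
  · intro a b p hb n
    rw [freeP_res_iff, freeP_res_iff, freeP_rename (Equiv.swap a b), Equiv.symm_swap]
    constructor
    · rintro ⟨hna, hp⟩
      have hnb : n ≠ b := fun e => hb (e ▸ hp)
      refine ⟨hnb, ?_⟩
      rw [Equiv.swap_apply_of_ne_of_ne hna hnb]; exact hp
    · rintro ⟨hnb, hp⟩
      by_cases hna : n = a
      · subst hna; rw [Equiv.swap_apply_left] at hp; exact absurd hp hb
      · rw [Equiv.swap_apply_of_ne_of_ne hna hnb] at hp; exact ⟨hna, hp⟩
  · intro p q n; rw [freeP_par_iff, freeP_par_iff]; exact Or.comm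
  · intro p q r n; simp only [freeP_par_iff]; exact or_assoc
  · intro p n; rw [freeP_par_iff]
    exact ⟨fun h => h.elim id (fun h => absurd h not_freeP_zero), Or.inl⟩
  · intro a p q ha n
    simp only [freeP_res_iff, freeP_par_iff]
    constructor
    · rintro ⟨h1, h2 | h2⟩
      · exact Or.inl ⟨h1, h2⟩
      · exact Or.inr h2
    · rintro (⟨h1, h2⟩ | h2)
      · exact ⟨h1, Or.inl h2⟩
      · exact ⟨fun e => ha (e ▸ h2), Or.inr h2⟩
  · intro a n; rw [freeP_res_iff]
    constructor
    · rintro ⟨_, h⟩; exact absurd h not_freeP_zero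
    · intro h; exact absurd h not_freeP_zero
  · intro a b p n; simp only [freeP_res_iff]
    constructor
    · rintro ⟨h1, h2, h3⟩; exact ⟨h2, h1, h3⟩
    · rintro ⟨h1, h2, h3⟩; exact ⟨h2, h1, h3⟩
  · exact fun s n => Iff.rfl
  · exact fun _ ih n => (ih n).symm
  · exact fun _ _ ih1 ih2 n => (ih1 n).trans (ih2 n)
  · intro α p p' s s' _ _ ih1 ih2 n
    simp only [freeS_cons_iff, ih1 n, ih2 n]

/-! ### Milner's lemma: structural congruence respects structural transitions -/

def Tr (p q : Proc) : Prop :=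
  ∀ α x, StepS p α x → ∃ y, StepS q α y ∧ CongP x y

def TrS (s t : Sm) : Prop :=
  ∀ α x, SMem α x s → ∃ y, SMem α y t ∧ CongP x y

theorem Tr.comp {p q r : Proc} (h1 : Tr p q) (h2 : Tr q r) : Tr p r := by
  intro α x hx
  obtain ⟨y, hy, c1⟩ := h1 α x hx
  obtain ⟨z, hz, c2⟩ := h2 α y hy
  exact ⟨z, hz, c1.trans c2⟩

theorem mem_fnAct_out {a c : ℕ} : a ∈ fnAct (.out c) ↔ a = c := by simp [fnAct]
theorem mem_fnAct_inp {a c : ℕ} : a ∈ fnAct (.inp c) ↔ a = c := by simp [fnAct]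
theorem not_mem_fnAct_tau {a : ℕ} : a ∉ fnAct .tau := by simp [fnAct]

theorem tr_par {p p' q q' : Proc} (hp : CongP p p') (hq : CongP q q')
    (h1 : Tr p p') (h2 : Tr q q') : Tr (.par p q) (.par p' q') := by
  intro α x hx
  cases hx with
  | parL h =>
      obtain ⟨y, hy, c⟩ := h1 _ _ h
      exact ⟨.par y q', StepS.parL hy, CongP.par_congr c hq⟩
  | parR h =>
      obtain ⟨y, hy, c⟩ := h2 _ _ h
      exact ⟨.par p' y, StepS.parR hy, CongP.par_congr hp c⟩
  | synL ha hb =>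
      obtain ⟨y, hy, c⟩ := h1 _ _ ha
      obtain ⟨z, hz, c'⟩ := h2 _ _ hb
      exact ⟨.par y z, StepS.synL hy hz, CongP.par_congr c c'⟩
  | synR ha hb =>
      obtain ⟨y, hy, c⟩ := h1 _ _ ha
      obtain ⟨z, hz, c'⟩ := h2 _ _ hb
      exact ⟨.par y z, StepS.synR hy hz, CongP.par_congr c c'⟩

theorem tr_res {a : ℕ} {p p' : Proc} (h : Tr p p') : Tr (.res a p) (.res a p') := by
  intro α x hx
  cases hx with
  | res ha hstep =>
      obtain ⟨y, hy, c⟩ := h _ _ hstep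
      exact ⟨.res a y, StepS.res ha hy, CongP.res_congr c⟩

theorem tr_comm (p q : Proc) : Tr (.par p q) (.par q p) := by
  intro α x hx
  cases hx with
  | parL h => exact ⟨.par q _, StepS.parR h, CongP.par_comm _ _⟩
  | parR h => exact ⟨.par _ p, StepS.parL h, CongP.par_comm _ _⟩
  | synL ha hb => exact ⟨.par _ _, StepS.synR hb ha, CongP.par_comm _ _⟩
  | synR ha hb => exact ⟨.par _ _, StepS.synL hb ha, CongP.par_comm _ _⟩

theorem congP_tr {p q : Proc} (h : CongP p q) : Tr p q ∧ Tr q p := by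
  refine CongP.rec (motive_1 := fun p q _ => Tr p q ∧ Tr q p)
    (motive_2 := fun s t _ => TrS s t ∧ TrS t s)
    ?_ ?_ ?_ ?_ ?_ ?_ ?_ ?_ ?_ ?_ ?_ ?_ ?_ ?_ ?_ ?_ ?_ h
  · exact fun p => ⟨fun α x hx => ⟨x, hx, CongP.refl x⟩, fun α x hx => ⟨x, hx, CongP.refl x⟩⟩
  · exact fun _ ih => ⟨ih.2, ih.1⟩
  · exact fun _ _ ih1 ih2 => ⟨ih1.1.comp ih2.1, ih2.2.comp ih1.2⟩
  · intro p p' q q' hp hq ih1 ih2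
    exact ⟨tr_par hp hq ih1.1 ih2.1, tr_par hp.symm hq.symm ih1.2 ih2.2⟩
  · intro a p p' _ ih
    exact ⟨tr_res ih.1, tr_res ih.2⟩
  · intro s s' _ ih
    constructor
    · intro α x hx
      cases hx with
      | pre h =>
          obtain ⟨y, hy, c⟩ := ih.1 _ _ h
          exact ⟨y, StepS.pre hy, c⟩
    · intro α x hx
      cases hx with
      | pre h =>
          obtain ⟨y, hy, c⟩ := ih.2 _ _ h
          exact ⟨y, StepS.pre hy, c⟩
  · -- alpha
    intro a b p hb
    constructor
    · intro α x hx
      cases hx with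
      | res ha hstep =>
          have hbα : b ∉ fnAct α := fun hc => hb (stepS_fnAct_free hstep hc)
          have hact : renameAct (Equiv.swap a b) α = α := by
            cases α with
            | tau => rfl
            | inp c =>
                rw [mem_fnAct_inp] at ha hbα
                simp [renameAct, Equiv.swap_apply_of_ne_of_ne
                  (fun h => ha h.symm) (fun h => hbα h.symm)]
            | out c =>
                rw [mem_fnAct_out] at ha hbα
                simp [renameAct, Equiv.swap_apply_of_ne_of_ne
                  (fun h => ha h.symm) (fun h => hbα h.symm)]
          have hs := stepS_rename (Equiv.swap a b) hstep
          rw [hact] at hs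
          refine ⟨.res b (renameP (Equiv.swap a b) _), StepS.res hbα hs, ?_⟩
          exact CongP.alpha (fun h => hb (stepS_free_mono hstep h))
    · intro α x hx
      cases hx with
      | res hbα hstep =>
          have hfa : ¬ FreeP a (renameP (⇑(Equiv.swap a b)) p) := by
            intro hm
            rw [freeP_rename (Equiv.swap a b), Equiv.symm_swap,
              Equiv.swap_apply_left] at hm
            exact hb hm
          have haα : a ∉ fnAct α := fun hc => hfa (stepS_fnAct_free hstep hc)
          have hact : renameAct (Equiv.swap a b) α = α := by
            cases α with
            | tau => rfl
            | inp c =>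
                rw [mem_fnAct_inp] at haα hbα
                simp [renameAct, Equiv.swap_apply_of_ne_of_ne
                  (fun h => haα h.symm) (fun h => hbα h.symm)]
            | out c =>
                rw [mem_fnAct_out] at haα hbα
                simp [renameAct, Equiv.swap_apply_of_ne_of_ne
                  (fun h => haα h.symm) (fun h => hbα h.symm)]
          have hs := stepS_rename (Equiv.swap a b) hstep
          rw [hact, renameP_comp] at hs
          rw [renameP_id _ (fun x => Equiv.swap_apply_self a b x)] at hs
          refine ⟨.res a (renameP (Equiv.swap a b) _), StepS.res haα hs, ?_⟩
          have hnf : ¬ FreeP a _ := fun h => hfa (stepS_free_mono hstep h)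
          have := CongP.alpha (a := b) (b := a) hnf
          rwa [Equiv.swap_comm] at this
  · exact fun p q => ⟨tr_comm p q, tr_comm q p⟩
  · -- par_assoc
    intro p q r
    constructor
    · intro α x hx
      cases hx with
      | parL h =>
          cases h with
          | parL hp => exact ⟨_, StepS.parL hp, CongP.par_assoc _ _ _⟩
          | parR hq => exact ⟨_, StepS.parR (StepS.parL hq), CongP.par_assoc _ _ _⟩
          | synL hp hq => exact ⟨_, StepS.synL hp (StepS.parL hq), CongP.par_assoc _ _ _⟩
          | synR hp hq => exact ⟨_, StepS.synR hp (StepS.parL hq), CongP.par_assoc _ _ _⟩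
      | parR h => exact ⟨_, StepS.parR (StepS.parR h), CongP.par_assoc _ _ _⟩
      | synL h hr =>
          cases h with
          | parL hp => exact ⟨_, StepS.synL hp (StepS.parR hr), CongP.par_assoc _ _ _⟩
          | parR hq => exact ⟨_, StepS.parR (StepS.synL hq hr), CongP.par_assoc _ _ _⟩
      | synR h hr =>
          cases h with
          | parL hp => exact ⟨_, StepS.synR hp (StepS.parR hr), CongP.par_assoc _ _ _⟩
          | parR hq => exact ⟨_, StepS.parR (StepS.synR hq hr), CongP.par_assoc _ _ _⟩
    · intro α x hx
      cases hx with
      | parL hp => exact ⟨_, StepS.parL (StepS.parL hp), (CongP.par_assoc _ _ _).symm⟩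
      | parR h =>
          cases h with
          | parL hq => exact ⟨_, StepS.parL (StepS.parR hq), (CongP.par_assoc _ _ _).symm⟩
          | parR hr => exact ⟨_, StepS.parR hr, (CongP.par_assoc _ _ _).symm⟩
          | synL hq hr => exact ⟨_, StepS.synL (StepS.parR hq) hr, (CongP.par_assoc _ _ _).symm⟩
          | synR hq hr => exact ⟨_, StepS.synR (StepS.parR hq) hr, (CongP.par_assoc _ _ _).symm⟩
      | synL hp h =>
          cases h with
          | parL hq => exact ⟨_, StepS.parL (StepS.synL hp hq), (CongP.par_assoc _ _ _).symm⟩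
          | parR hr => exact ⟨_, StepS.synL (StepS.parL hp) hr, (CongP.par_assoc _ _ _).symm⟩
      | synR hp h =>
          cases h with
          | parL hq => exact ⟨_, StepS.parL (StepS.synR hp hq), (CongP.par_assoc _ _ _).symm⟩
          | parR hr => exact ⟨_, StepS.synR (StepS.parL hp) hr, (CongP.par_assoc _ _ _).symm⟩
  · -- par_zero
    intro p
    constructor
    · intro α x hx
      cases hx with
      | parL h => exact ⟨_, h, CongP.par_zero _⟩
      | parR h => exact absurd h not_stepS_zero
      | synL ha hb => exact absurd hb not_stepS_zero
      | synR ha hb => exact absurd hb not_stepS_zero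
    · intro α x hx
      exact ⟨.par x Proc.zero, StepS.parL hx, (CongP.par_zero x).symm⟩
  · -- res_par
    intro a p q ha
    constructor
    · intro α x hx
      cases hx with
      | res haα h =>
          cases h with
          | parL hp =>
              exact ⟨_, StepS.parL (StepS.res haα hp), CongP.res_par ha⟩
          | parR hq =>
              exact ⟨_, StepS.parR hq,
                CongP.res_par (fun h => ha (stepS_free_mono hq h))⟩
          | @synL c _ p1 _ q1 hp hq =>
              have hac : a ∉ fnAct (Act.out c) := by
                rw [mem_fnAct_out]
                intro he
                exact ha (he ▸ stepS_fnAct_free hq (mem_fnAct_inp.mpr rfl))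
              exact ⟨_, StepS.synL (StepS.res hac hp) hq,
                CongP.res_par (fun h => ha (stepS_free_mono hq h))⟩
          | @synR c _ p1 _ q1 hp hq =>
              have hac : a ∉ fnAct (Act.inp c) := by
                rw [mem_fnAct_inp]
                intro he
                exact ha (he ▸ stepS_fnAct_free hq (mem_fnAct_out.mpr rfl))
              exact ⟨_, StepS.synR (StepS.res hac hp) hq,
                CongP.res_par (fun h => ha (stepS_free_mono hq h))⟩
    · intro α x hx
      cases hx with
      | parL h =>
          cases h with
          | res haα hp =>
              exact ⟨_, StepS.res haα (StepS.parL hp), (CongP.res_par ha).symm⟩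
      | parR hq =>
          have haα : _ ∉ fnAct α := fun hc => ha (stepS_fnAct_free hq hc)
          exact ⟨_, StepS.res haα (StepS.parR hq),
            (CongP.res_par (fun h => ha (stepS_free_mono hq h))).symm⟩
      | synL h hq =>
          cases h with
          | res hac hp =>
              exact ⟨_, StepS.res not_mem_fnAct_tau (StepS.synL hp hq),
                (CongP.res_par (fun h => ha (stepS_free_mono hq h))).symm⟩
      | synR h hq =>
          cases h with
          | res hac hp =>
              exact ⟨_, StepS.res not_mem_fnAct_tau (StepS.synR hp hq),
                (CongP.res_par (fun h => ha (stepS_free_mono hq h))).symm⟩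
  · -- res_zero
    intro a
    constructor
    · intro α x hx
      cases hx with
      | res _ h => exact absurd h not_stepS_zero
    · intro α x hx
      exact absurd hx not_stepS_zero
  · -- res_res
    intro a b p
    constructor
    · intro α x hx
      cases hx with
      | res ha h =>
          cases h with
          | res hb hp =>
              exact ⟨_, StepS.res hb (StepS.res ha hp), CongP.res_res _ _ _⟩
    · intro α x hx
      cases hx with
      | res hb h =>
          cases h with
          | res ha hp =>
              exact ⟨_, StepS.res ha (StepS.res hb hp), CongP.res_res _ _ _⟩
  · exact fun s => ⟨fun α x hx => ⟨x, hx, CongP.refl x⟩, fun α x hx => ⟨x, hx, CongP.refl x⟩⟩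
  · exact fun _ ih => ⟨ih.2, ih.1⟩
  · refine fun _ _ ih1 ih2 => ⟨?_, ?_⟩
    · intro α x hx
      obtain ⟨y, hy, c⟩ := ih1.1 α x hx
      obtain ⟨z, hz, c'⟩ := ih2.1 α y hy
      exact ⟨z, hz, c.trans c'⟩
    · intro α x hx
      obtain ⟨y, hy, c⟩ := ih2.2 α x hx
      obtain ⟨z, hz, c'⟩ := ih1.2 α y hy
      exact ⟨z, hz, c.trans c'⟩
  · -- cons_congr
    intro α p p' s s' hc _ _ ih
    constructor
    · intro β x hx
      cases hx with
      | head => exact ⟨p', SMem.head, hc⟩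
      | tail h =>
          obtain ⟨y, hy, c⟩ := ih.1 _ _ h
          exact ⟨y, SMem.tail hy, c⟩
    · intro β x hx
      cases hx with
      | head => exact ⟨p, SMem.head, hc.symm⟩
      | tail h =>
          obtain ⟨y, hy, c⟩ := ih.2 _ _ h
          exact ⟨y, SMem.tail hy, c⟩

/-! ### Correspondence between `Step` and `StepS` -/

theorem stepS_step {p : Proc} {α : Act} {p' : Proc} (h : StepS p α p') :
    Step p α p' := by
  induction h with
  | pre h => exact Step.pre h
  | res ha _ ih => exact Step.res ha ih
  | parL _ ih => exact Step.par ih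
  | parR _ ih =>
      rename_i p q q' _
      exact Step.str (CongP.par_comm q p) (CongP.par_comm _ p) (Step.par ih)
  | synL _ _ ih1 ih2 => exact Step.syn ih1 ih2
  | synR _ _ ih1 ih2 =>
      rename_i c p p1 q q1 _ _
      exact Step.str (CongP.par_comm q p) (CongP.par_comm _ _) (Step.syn ih2 ih1)

theorem step_iff_stepS {p : Proc} {α : Act} {p' : Proc} :
    Step p α p' ↔ ∃ z, StepS p α z ∧ CongP z p' := by
  constructor
  · intro h
    induction h with
    | pre h => exact ⟨_, StepS.pre h, CongP.refl _⟩
    | res ha _ ih =>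
        obtain ⟨z, hz, c⟩ := ih
        exact ⟨_, StepS.res ha hz, CongP.res_congr c⟩
    | par _ ih =>
        obtain ⟨z, hz, c⟩ := ih
        exact ⟨_, StepS.parL hz, CongP.par_congr c (CongP.refl _)⟩
    | syn _ _ ih1 ih2 =>
        obtain ⟨z1, hz1, c1⟩ := ih1
        obtain ⟨z2, hz2, c2⟩ := ih2
        exact ⟨_, StepS.synL hz1 hz2, CongP.par_congr c1 c2⟩
    | str hpq hp'q' _ ih =>
        obtain ⟨z, hz, c⟩ := ih
        obtain ⟨y, hy, cy⟩ := (congP_tr hpq).1 _ _ hz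
        exact ⟨y, hy, (cy.symm.trans c).trans hp'q'⟩
  · rintro ⟨z, hz, c⟩
    exact Step.str (CongP.refl p) c (stepS_step hz)

theorem step_fnAct_free {p : Proc} {α : Act} {p' : Proc} (h : Step p α p')
    {n : ℕ} (hn : n ∈ fnAct α) : FreeP n p := by
  obtain ⟨z, hz, _⟩ := step_iff_stepS.mp h
  exact stepS_fnAct_free hz hn

theorem step_free_mono {p : Proc} {α : Act} {p' : Proc} (h : Step p α p')
    {n : ℕ} (hn : FreeP n p') : FreeP n p := by
  obtain ⟨z, hz, c⟩ := step_iff_stepS.mp h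
  exact stepS_free_mono hz ((congP_free c n).mpr hn)

/-! ### Completeness of the dialgebra w.r.t. complementary transitions -/

theorem cshuffle (X p Z : Proc) :
    CongP (.par X (.par p Z)) (.par p (.par X Z)) :=
  ((CongP.par_assoc X p Z).symm.trans
    (CongP.par_congr (CongP.par_comm X p) (CongP.refl Z))).trans
    (CongP.par_assoc p X Z)

theorem bred_of_inp {q : Proc} {β : Act} {q₁ : Proc} (hst : StepS q β q₁) :
    ∀ (f : ℕ ≃ ℕ) (c : ℕ) (p₀ : Proc) (s : Sm),
    β = Act.inp c → SMem (Act.out (f c)) p₀ s →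
    BRed (.sum s) (renameP ⇑f q) (.par p₀ (renameP ⇑f q₁)) := by
  induction hst with
  | pre h =>
      intro f c p₀ s hβ hmem
      subst hβ
      exact BRed.syn hmem (smem_rename ⇑f h)
  | @res a β q₀ q₀' ha hstep ih =>
      intro f c p₀ s hβ hmem
      subst hβ
      have hac : a ≠ c := fun h => ha (mem_fnAct_inp.mpr h)
      obtain ⟨b, hb1, hb2, hb3, hb4⟩ :
          ∃ b, freshP (Proc.sum s) ≤ b ∧ freshP (renameP ⇑f q₀) ≤ b ∧
            freshP (renameP ⇑f q₀') ≤ b ∧ f c < b :=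
        ⟨freshP (Proc.sum s) + freshP (renameP ⇑f q₀) + freshP (renameP ⇑f q₀') + f c + 1,
          by omega, by omega, by omega, by omega⟩
      set f' : ℕ ≃ ℕ := f.trans (Equiv.swap (f a) b) with hf'
      have efun : ⇑f' = fun x => (Equiv.swap (f a) b) (f x) :=
        funext fun x => Equiv.trans_apply f _ x
      have ecomp : ∀ r : Proc, renameP ⇑f' r = renameP (⇑(Equiv.swap (f a) b)) (renameP ⇑f r) :=
        fun r => by rw [renameP_comp, efun]
      have hf'c : f' c = f c := by
        rw [Equiv.trans_apply]
        exact Equiv.swap_apply_of_ne_of_ne (fun h => hac (f.injective h).symm)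
          (Nat.ne_of_lt hb4)
      have hbs : ¬ FreeP b (Proc.sum s) := not_free_of_fresh hb1
      have hbp₀ : ¬ FreeP b p₀ := fun h => hbs (FreeP.sum (smem_free_proc hmem h))
      have hIH := ih f' c p₀ s rfl (by rw [hf'c]; exact hmem)
      have halpha : CongP (.res (f a) (renameP ⇑f q₀)) (.res b (renameP ⇑f' q₀)) := by
        rw [ecomp]; exact CongP.alpha (not_free_of_fresh hb2)
      have halpha' : CongP (.res (f a) (renameP ⇑f q₀')) (.res b (renameP ⇑f' q₀')) := by
        rw [ecomp]; exact CongP.alpha (not_free_of_fresh hb3)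
      have hB := (BRed.hid (a := b) hIH.sym hbs).sym
      refine BRed.str2 hB (CongP.refl _) halpha.symm ?_
      refine (CongP.res_congr (CongP.par_comm _ _)).trans ?_
      refine (CongP.res_par hbp₀).trans ?_
      exact (CongP.par_comm _ _).trans (CongP.par_congr (CongP.refl _) halpha'.symm)
  | @parL β qa qa' qb hstep ih =>
      intro f c p₀ s hβ hmem
      have hIH := ih f c p₀ s hβ hmem
      have hB := ((hIH.sym).par2 (s := renameP ⇑f qb)).sym
      refine BRed.str2 hB (CongP.refl _) (CongP.refl _) ?_
      exact (cshuffle _ _ _).trans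
        (CongP.par_congr (CongP.refl _) (CongP.par_comm _ _))
  | @parR β qa qb qb' hstep ih =>
      intro f c p₀ s hβ hmem
      have hIH := ih f c p₀ s hβ hmem
      have hB := ((hIH.sym).par2 (s := renameP ⇑f qa)).sym
      refine BRed.str2 hB (CongP.refl _) (CongP.par_comm _ _) ?_
      exact cshuffle _ _ _
  | synL _ _ _ _ => intro f c p₀ s hβ _; cases hβ
  | synR _ _ _ _ => intro f c p₀ s hβ _; cases hβ

theorem bred_of_out {p : Proc} {β : Act} {p₁ : Proc} (hst : StepS p β p₁) :
    ∀ (f : ℕ ≃ ℕ) (c : ℕ) (q q₁ : Proc),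
    β = Act.out c → StepS q (Act.inp (f c)) q₁ →
    BRed (renameP ⇑f p) q (.par (renameP ⇑f p₁) q₁) := by
  induction hst with
  | pre h =>
      intro f c q q₁ hβ hq
      subst hβ
      have erefl : ∀ r : Proc, renameP ⇑(Equiv.refl ℕ) r = r :=
        fun r => renameP_id _ (fun x => rfl) r
      have := bred_of_inp hq (Equiv.refl ℕ) (f c) (renameP ⇑f _) (renameS ⇑f _)
        rfl (smem_rename ⇑f h)
      rw [erefl, erefl] at this
      exact this
  | @res a β p₀ p₀' ha hstep ih =>
      intro f c q q₁ hβ hq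
      subst hβ
      obtain ⟨b, hb1, hb2, hb3, hb4, hb5⟩ :
          ∃ b, freshP q ≤ b ∧ freshP (renameP ⇑f p₀) ≤ b ∧
            freshP (renameP ⇑f p₀') ≤ b ∧ f c < b ∧ freshP q₁ ≤ b :=
        ⟨freshP q + freshP (renameP ⇑f p₀) + freshP (renameP ⇑f p₀') + f c + freshP q₁ + 1,
          by omega, by omega, by omega, by omega, by omega⟩
      have hac : a ≠ c := fun h => ha (mem_fnAct_out.mpr h)
      set f' : ℕ ≃ ℕ := f.trans (Equiv.swap (f a) b) with hf'
      have efun : ⇑f' = fun x => (Equiv.swap (f a) b) (f x) :=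
        funext fun x => Equiv.trans_apply f _ x
      have ecomp : ∀ r : Proc, renameP ⇑f' r = renameP (⇑(Equiv.swap (f a) b)) (renameP ⇑f r) :=
        fun r => by rw [renameP_comp, efun]
      have hf'c : f' c = f c := by
        rw [Equiv.trans_apply]
        exact Equiv.swap_apply_of_ne_of_ne (fun h => hac (f.injective h).symm)
          (Nat.ne_of_lt hb4)
      have hIH := ih f' c q q₁ rfl (by rw [hf'c]; exact hq)
      have halpha : CongP (.res (f a) (renameP ⇑f p₀)) (.res b (renameP ⇑f' p₀)) := by
        rw [ecomp]; exact CongP.alpha (not_free_of_fresh hb2)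
      have halpha' : CongP (.res (f a) (renameP ⇑f p₀')) (.res b (renameP ⇑f' p₀')) := by
        rw [ecomp]; exact CongP.alpha (not_free_of_fresh hb3)
      have hB := BRed.hid (a := b) hIH (not_free_of_fresh hb1)
      refine BRed.str2 hB halpha.symm (CongP.refl _) ?_
      refine (CongP.res_par (not_free_of_fresh hb5)).trans ?_
      exact CongP.par_congr halpha'.symm (CongP.refl _)
  | @parL β pa pa' pb hstep ih =>
      intro f c q q₁ hβ hq
      have hIH := ih f c q q₁ hβ hq
      have hB := hIH.par2 (s := renameP ⇑f pb)
      refine BRed.str2 hB (CongP.refl _) (CongP.refl _) ?_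
      exact ((CongP.par_assoc _ _ _).symm).trans
        (CongP.par_congr (CongP.par_comm _ _) (CongP.refl _))
  | @parR β pa pb pb' hstep ih =>
      intro f c q q₁ hβ hq
      have hIH := ih f c q q₁ hβ hq
      have hB := hIH.par2 (s := renameP ⇑f pa)
      refine BRed.str2 hB (CongP.par_comm _ _) (CongP.refl _) ?_
      exact (CongP.par_assoc _ _ _).symm
  | synL _ _ _ _ => intro f c q q₁ hβ _; cases hβ
  | synR _ _ _ _ => intro f c q q₁ hβ _; cases hβ

theorem bred_syn {p q p₁ q₁ : Proc} {c : ℕ}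
    (hp : StepS p (.out c) p₁) (hq : StepS q (.inp c) q₁) :
    BRed p q (.par p₁ q₁) := by
  have erefl : ∀ r : Proc, renameP ⇑(Equiv.refl ℕ) r = r :=
    fun r => renameP_id _ (fun x => rfl) r
  have := bred_of_out hp (Equiv.refl ℕ) c q q₁ rfl (by simpa using hq)
  rwa [erefl, erefl] at this

/-! ### Soundness of the dialgebra -/

theorem bred_sound {p q r : Proc} (h : BRed p q r) :
    ∃ c p' q',
      ((Step p (.out c) p' ∧ Step q (.inp c) q') ∨
       (Step p (.inp c) p' ∧ Step q (.out c) q')) ∧ CongP r (.par p' q') := by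
  refine BRed.rec (motive_1 := fun _ _ _ => True)
    (motive_2 := fun p q r _ => ∃ c p' q',
      ((Step p (.out c) p' ∧ Step q (.inp c) q') ∨
       (Step p (.inp c) p' ∧ Step q (.out c) q')) ∧ CongP r (.par p' q'))
    ?_ ?_ ?_ ?_ ?_ ?_ ?_ ?_ ?_ ?_ h
  · intros; trivial
  · intros; trivial
  · intros; trivial
  · intros; trivial
  · intros; trivial
  · -- hid
    intro a p q r hbr hfq ih
    obtain ⟨c, p', q', hd, hc⟩ := ih
    cases hd with
    | inl hd =>
        have hac : a ∉ fnAct (Act.out c) := by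
          rw [mem_fnAct_out]
          intro he
          exact hfq (he ▸ step_fnAct_free hd.2 (mem_fnAct_inp.mpr rfl))
        refine ⟨c, .res a p', q', Or.inl ⟨Step.res hac hd.1, hd.2⟩, ?_⟩
        exact (CongP.res_congr hc).trans
          (CongP.res_par (fun h => hfq (step_free_mono hd.2 h)))
    | inr hd =>
        have hac : a ∉ fnAct (Act.inp c) := by
          rw [mem_fnAct_inp]
          intro he
          exact hfq (he ▸ step_fnAct_free hd.2 (mem_fnAct_out.mpr rfl))
        refine ⟨c, .res a p', q', Or.inr ⟨Step.res hac hd.1, hd.2⟩, ?_⟩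
        exact (CongP.res_congr hc).trans
          (CongP.res_par (fun h => hfq (step_free_mono hd.2 h)))
  · -- par2
    intro p q r s hbr ih
    obtain ⟨c, p', q', hd, hc⟩ := ih
    refine ⟨c, .par p' s, q', ?_, ?_⟩
    · cases hd with
      | inl hd => exact Or.inl ⟨Step.par hd.1, hd.2⟩
      | inr hd => exact Or.inr ⟨Step.par hd.1, hd.2⟩
    · refine (CongP.par_congr (CongP.refl s) hc).trans ?_
      exact ((CongP.par_assoc s p' q').symm).trans
        (CongP.par_congr (CongP.par_comm s p') (CongP.refl q'))
  · -- syn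
    intro a p q s t h1 h2
    exact ⟨a, p, q, Or.inl ⟨Step.pre h1, Step.pre h2⟩, CongP.refl _⟩
  · -- sym
    intro p q r hbr ih
    obtain ⟨c, p', q', hd, hc⟩ := ih
    refine ⟨c, q', p', ?_, hc.trans (CongP.par_comm p' q')⟩
    cases hd with
    | inl hd => exact Or.inr ⟨hd.2, hd.1⟩
    | inr hd => exact Or.inl ⟨hd.2, hd.1⟩
  · -- str2
    intro p q r p1 q1 r1 hbr hp hq hr ih
    obtain ⟨c, p', q', hd, hc⟩ := ih
    refine ⟨c, p', q', ?_, hr.symm.trans hc⟩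
    cases hd with
    | inl hd => exact Or.inl ⟨Step.str hp (CongP.refl p') hd.1, Step.str hq (CongP.refl q') hd.2⟩
    | inr hd => exact Or.inr ⟨Step.str hp (CongP.refl p') hd.1, Step.str hq (CongP.refl q') hd.2⟩

theorem ured_sound {p r : Proc} (h : URed p r) : Step p .tau r := by
  refine URed.rec (motive_1 := fun p r _ => Step p .tau r)
    (motive_2 := fun _ _ _ _ => True)
    ?_ ?_ ?_ ?_ ?_ ?_ ?_ ?_ ?_ ?_ h
  · exact fun h => Step.pre h
  · exact fun _ ih => Step.res not_mem_fnAct_tau ih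
  · exact fun _ ih => Step.par ih
  · -- int
    intro p q r hbr _
    obtain ⟨c, p', q', hd, hc⟩ := bred_sound hbr
    cases hd with
    | inl hd =>
        exact Step.str (CongP.refl _) hc.symm (Step.syn hd.1 hd.2)
    | inr hd =>
        exact Step.str (CongP.par_comm q p)
          ((CongP.par_comm q' p').trans hc.symm) (Step.syn hd.2 hd.1)
  · exact fun _ hpq hrs ih => Step.str hpq hrs ih
  · intros; trivial
  · intros; trivial
  · intros; trivial
  · intros; trivial
  · intros; trivial

theorem stepS_tau_ured {p z : Proc} {β : Act} (h : StepS p β z) (hβ : β = .tau) :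
    URed p z := by
  induction h with
  | pre h => subst hβ; exact URed.tau h
  | res _ _ ih => exact URed.res (ih hβ)
  | parL _ ih => exact URed.par1 (ih hβ)
  | parR h ih =>
      rename_i p q q'
      exact URed.str1 (URed.par1 (ih hβ)) (CongP.par_comm q p) (CongP.par_comm q' p)
  | synL hp hq ih1 ih2 => exact URed.int (bred_syn hp hq)
  | synR hp hq ih1 ih2 =>
      rename_i c p p1 q q1
      exact URed.str1 (URed.int (bred_syn hq hp).sym) (CongP.refl _) (CongP.par_comm q1 p1)

theorem step_tau_ured {p r : Proc} (h : Step p .tau r) : URed p r := by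
  obtain ⟨z, hz, c⟩ := step_iff_stepS.mp h
  exact URed.str1 (stepS_tau_ured hz rfl) (CongP.refl p) c

/-! ### Testing processes -/

def outP (a : ℕ) : Proc := .sum (.cons (.out a) Proc.zero .nil)
def inpP (a : ℕ) : Proc := .sum (.cons (.inp a) Proc.zero .nil)

theorem step_inp_bred {q q' : Proc} {a : ℕ} (h : Step q (.inp a) q') :
    BRed q (outP a) q' := by
  obtain ⟨z, hz, c⟩ := step_iff_stepS.mp h
  have hp : StepS (outP a) (.out a) Proc.zero := StepS.pre SMem.head
  refine BRed.str2 ((bred_syn hp hz).sym) (CongP.refl q) (CongP.refl _) ?_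
  exact ((CongP.par_comm _ _).trans (CongP.par_zero z)).trans c

theorem step_out_bred {q q' : Proc} {a : ℕ} (h : Step q (.out a) q') :
    BRed q (inpP a) q' := by
  obtain ⟨z, hz, c⟩ := step_iff_stepS.mp h
  have hp : StepS (inpP a) (.inp a) Proc.zero := StepS.pre SMem.head
  refine BRed.str2 (bred_syn hz hp) (CongP.refl q) (CongP.refl _) ?_
  exact (CongP.par_zero z).trans c

theorem bred_outP_inv {v w : Proc} {a : ℕ} (h : BRed v (outP a) w) :
    ∃ v', Step v (.inp a) v' ∧ CongP w v' := by
  obtain ⟨c, p', q', hd, hc⟩ := bred_sound h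
  cases hd with
  | inl hd =>
      exfalso
      obtain ⟨z, hz, _⟩ := step_iff_stepS.mp hd.2
      rw [outP] at hz
      cases hz with
      | pre hm =>
          cases hm with
          | tail hm' => cases hm'
  | inr hd =>
      obtain ⟨z, hz, cz⟩ := step_iff_stepS.mp hd.2
      rw [outP] at hz
      cases hz with
      | pre hm =>
          cases hm with
          | head =>
              refine ⟨p', hd.1, ?_⟩
              refine hc.trans ?_
              exact (CongP.par_congr (CongP.refl p') cz.symm).trans (CongP.par_zero p')
          | tail hm' => cases hm'

theorem bred_inpP_inv {v w : Proc} {a : ℕ} (h : BRed v (inpP a) w) :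
    ∃ v', Step v (.out a) v' ∧ CongP w v' := by
  obtain ⟨c, p', q', hd, hc⟩ := bred_sound h
  cases hd with
  | inr hd =>
      exfalso
      obtain ⟨z, hz, _⟩ := step_iff_stepS.mp hd.2
      rw [inpP] at hz
      cases hz with
      | pre hm =>
          cases hm with
          | tail hm' => cases hm'
  | inl hd =>
      obtain ⟨z, hz, cz⟩ := step_iff_stepS.mp hd.2
      rw [inpP] at hz
      cases hz with
      | pre hm =>
          cases hm with
          | head =>
              refine ⟨p', hd.1, ?_⟩
              refine hc.trans ?_
              exact (CongP.par_congr (CongP.refl p') cz.symm).trans (CongP.par_zero p')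
          | tail hm' => cases hm'

/-! ### Strong bisimilarity facts -/

theorem sb_refl (p : Proc) : StrongBisim p p := by
  refine ⟨Eq, ⟨fun a b h => h.symm, ?_⟩, rfl⟩
  intro p q h α p' hs
  exact ⟨p', h ▸ hs, rfl⟩

theorem sb_symm {p q : Proc} (h : StrongBisim p q) : StrongBisim q p := by
  obtain ⟨R, hR, hpq⟩ := h
  exact ⟨R, hR, hR.1 hpq⟩

theorem sb_step {p q : Proc} (h : StrongBisim p q) {α : Act} {p' : Proc}
    (hs : Step p α p') : ∃ q', Step q α q' ∧ StrongBisim p' q' := by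
  obtain ⟨R, hR, hpq⟩ := h
  obtain ⟨q', h1, h2⟩ := hR.2 p q hpq α p' hs
  exact ⟨q', h1, R, hR, h2⟩

theorem sb_trans {p q r : Proc} (h1 : StrongBisim p q) (h2 : StrongBisim q r) :
    StrongBisim p r := by
  refine ⟨fun a c => ∃ b, StrongBisim a b ∧ StrongBisim b c, ⟨?_, ?_⟩, q, h1, h2⟩
  · rintro a c ⟨b, hab, hbc⟩
    exact ⟨b, sb_symm hbc, sb_symm hab⟩
  · rintro a c ⟨b, hab, hbc⟩ α a' hs
    obtain ⟨b', hsb', hab'⟩ := sb_step hab hs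
    obtain ⟨c', hsc', hbc'⟩ := sb_step hbc hsb'
    exact ⟨c', hsc', b', hab', hbc'⟩

theorem cong_sb {p q : Proc} (h : CongP p q) : StrongBisim p q := by
  refine ⟨CongP, ⟨fun a b h => h.symm, ?_⟩, h⟩
  intro p q h α p' hs
  exact ⟨p', Step.str h (CongP.refl p') hs, CongP.refl p'⟩

theorem sb_par {u u' v v' : Proc} (h1 : StrongBisim u u') (h2 : StrongBisim v v') :
    StrongBisim (.par u v) (.par u' v') := by
  refine ⟨fun x y => ∃ a a' b b', CongP x (.par a b) ∧ CongP y (.par a' b') ∧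
      StrongBisim a a' ∧ StrongBisim b b', ⟨?_, ?_⟩,
    u, u', v, v', CongP.refl _, CongP.refl _, h1, h2⟩
  · rintro x y ⟨a, a', b, b', cx, cy, ha, hb⟩
    exact ⟨a', a, b', b, cy, cx, sb_symm ha, sb_symm hb⟩
  · rintro x y ⟨a, a', b, b', cx, cy, ha, hb⟩ α x' hs
    have hs2 : Step (.par a b) α x' := Step.str cx (CongP.refl x') hs
    obtain ⟨z, hz, cz⟩ := step_iff_stepS.mp hs2
    cases hz with
    | parL h =>
        obtain ⟨a1', hstep', hsb'⟩ := sb_step ha (stepS_step h)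
        refine ⟨.par a1' b', Step.str cy.symm (CongP.refl _) (Step.par hstep'),
          _, a1', b, b', cz.symm, CongP.refl _, hsb', hb⟩
    | parR h =>
        obtain ⟨b1', hstep', hsb'⟩ := sb_step hb (stepS_step h)
        have hy : Step (.par a' b') α (.par a' b1') :=
          Step.str (CongP.par_comm b' a') (CongP.par_comm b1' a') (Step.par hstep')
        exact ⟨.par a' b1', Step.str cy.symm (CongP.refl _) hy,
          a, a', _, b1', cz.symm, CongP.refl _, ha, hsb'⟩
    | synL hpa hpb =>
        obtain ⟨a1', hsa', hsba⟩ := sb_step ha (stepS_step hpa)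
        obtain ⟨b1', hsb', hsbb⟩ := sb_step hb (stepS_step hpb)
        exact ⟨.par a1' b1', Step.str cy.symm (CongP.refl _) (Step.syn hsa' hsb'),
          _, a1', _, b1', cz.symm, CongP.refl _, hsba, hsbb⟩
    | synR hpa hpb =>
        obtain ⟨a1', hsa', hsba⟩ := sb_step ha (stepS_step hpa)
        obtain ⟨b1', hsb', hsbb⟩ := sb_step hb (stepS_step hpb)
        have hy : Step (.par a' b') .tau (.par a1' b1') :=
          Step.str (CongP.par_comm b' a') (CongP.par_comm b1' a1') (Step.syn hsb' hsa')
        exact ⟨.par a1' b1', Step.str cy.symm (CongP.refl _) hy,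
          _, a1', _, b1', cz.symm, CongP.refl _, hsba, hsbb⟩

/-! ### The two directions -/

theorem dialg_to_strong {p q : Proc} (h : DialgBisim p q) : StrongBisim p q := by
  obtain ⟨Y, g, h, ⟨hom1, hom2⟩, hpq⟩ := h
  refine ⟨fun x y => ∃ u v, CongP u x ∧ CongP v y ∧ h u = h v, ⟨?_, ?_⟩,
    p, q, CongP.refl p, CongP.refl q, hpq⟩
  · rintro x y ⟨u, v, cu, cv, huv⟩
    exact ⟨v, u, cv, cu, huv.symm⟩
  · rintro x y ⟨u, v, cu, cv, huv⟩ α x' hs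
    have hsu : Step u α x' := Step.str cu.symm (CongP.refl x') hs
    cases α with
    | tau =>
        have hu : URed u x' := step_tau_ured hsu
        have hm : h x' ∈ g (Sum.inl (h u)) := by
          rw [hom1]; exact ⟨x', hu, rfl⟩
        rw [huv, hom1] at hm
        obtain ⟨w, hw, hwx⟩ := hm
        exact ⟨w, Step.str cv (CongP.refl w) (ured_sound hw),
          x', w, CongP.refl x', CongP.refl w, hwx.symm⟩
    | inp a =>
        have hu : BRed u (outP a) x' := step_inp_bred hsu
        have hm : h x' ∈ g (Sum.inr (h u, h (outP a))) := by
          rw [hom2]; exact ⟨x', hu, rfl⟩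
        rw [huv, hom2] at hm
        obtain ⟨w, hw, hwx⟩ := hm
        obtain ⟨v', hv', cw⟩ := bred_outP_inv hw
        exact ⟨v', Step.str cv (CongP.refl v') hv',
          x', w, CongP.refl x', cw, hwx.symm⟩
    | out a =>
        have hu : BRed u (inpP a) x' := step_out_bred hsu
        have hm : h x' ∈ g (Sum.inr (h u, h (inpP a))) := by
          rw [hom2]; exact ⟨x', hu, rfl⟩
        rw [huv, hom2] at hm
        obtain ⟨w, hw, hwx⟩ := hm
        obtain ⟨v', hv', cw⟩ := bred_inpP_inv hw
        exact ⟨v', Step.str cv (CongP.refl v') hv',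
          x', w, CongP.refl x', cw, hwx.symm⟩

theorem step_pair_bred {x y x' y' : Proc} {c : ℕ}
    (hx : Step x (.out c) x') (hy : Step y (.inp c) y') :
    BRed x y (.par x' y') := by
  obtain ⟨zx, hzx, czx⟩ := step_iff_stepS.mp hx
  obtain ⟨zy, hzy, czy⟩ := step_iff_stepS.mp hy
  exact BRed.str2 (bred_syn hzx hzy) (CongP.refl x) (CongP.refl y)
    (CongP.par_congr czx czy)

theorem strong_to_dialg {p q : Proc} (hpq : StrongBisim p q) : DialgBisim p q := by
  let s : Setoid Proc := ⟨StrongBisim, ⟨sb_refl, fun h => sb_symm h, fun h1 h2 => sb_trans h1 h2⟩⟩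
  refine ⟨Quotient s, ?_, Quotient.mk s, ⟨?_, ?_⟩, Quotient.sound hpq⟩
  · exact fun x => match x with
      | .inl y => {z | ∃ p r, Quotient.mk s p = y ∧ Quotient.mk s r = z ∧ URed p r}
      | .inr (y₁, y₂) => {z | ∃ p q r, Quotient.mk s p = y₁ ∧ Quotient.mk s q = y₂ ∧
          Quotient.mk s r = z ∧ BRed p q r}
  · intro x
    ext z
    constructor
    · rintro ⟨p, r, hp, hz, hured⟩
      have hsbp : StrongBisim p x := Quotient.exact hp
      obtain ⟨r', hstep', hsb⟩ := sb_step hsbp (ured_sound hured)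
      refine ⟨r', step_tau_ured hstep', ?_⟩
      rw [← hz]
      exact (Quotient.sound hsb).symm
    · rintro ⟨r, hured, hz⟩
      exact ⟨x, r, rfl, hz, hured⟩
  · intro x y
    ext z
    constructor
    · rintro ⟨p, q, r, hp, hq, hz, hbred⟩
      have hsbp : StrongBisim p x := Quotient.exact hp
      have hsbq : StrongBisim q y := Quotient.exact hq
      obtain ⟨c, p', q', hd, hc⟩ := bred_sound hbred
      cases hd with
      | inl hd =>
          obtain ⟨x', hsx, hsbp'⟩ := sb_step hsbp hd.1
          obtain ⟨y', hsy, hsbq'⟩ := sb_step hsbq hd.2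
          refine ⟨.par x' y', step_pair_bred hsx hsy, ?_⟩
          rw [← hz]
          exact (Quotient.sound (sb_trans (cong_sb hc) (sb_par hsbp' hsbq'))).symm
      | inr hd =>
          obtain ⟨x', hsx, hsbp'⟩ := sb_step hsbp hd.1
          obtain ⟨y', hsy, hsbq'⟩ := sb_step hsbq hd.2
          have hb : BRed x y (.par x' y') :=
            BRed.str2 (step_pair_bred hsy hsx).sym (CongP.refl x) (CongP.refl y)
              (CongP.par_comm y' x')
          refine ⟨.par x' y', hb, ?_⟩
          rw [← hz]
          exact (Quotient.sound (sb_trans (cong_sb hc) (sb_par hsbp' hsbq'))).symm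
    · rintro ⟨r, hbred, hz⟩
      exact ⟨x, y, r, rfl, rfl, hz, hbred⟩

/-- The CCS dialgebra and the CCS labelled transition system induce the same
bisimilarity on the set of CCS processes. -/
theorem ccs_dialgebraic_eq_lts_bisimilarity :
    ∀ p q : Proc, DialgBisim p q ↔ StrongBisim p q := by
  exact fun p q => ⟨dialg_to_strong, strong_to_dialg⟩
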